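/- Let X be the formal power series in ℤ⟦t⟧ whose coefficient of tⁿ is the sum of area(w) over all Motzkin paths w of length n. Then t² − (3t − 1)(t + 1)(t² + 2t − 1)·X + t²·(3t − 1)²·(t + 1)²·X² = 0 in ℤ⟦t⟧. -/

import Mathlib

open Finset

/-- Height after `i` steps of the walk `s`, starting at height `a`. -/
def height {n : ℕ} (a : ℤ) (s : Fin n → ℤ) (i : ℕ) : ℤ :=
  a + ∑ j ∈ Finset.univ.filter (fun j : Fin n => (j : ℕ) < i), s j

/-- The area under a path: the sum of its intermediate heights h_1 + ⋯ + h_{n−1}. -/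
def area {n : ℕ} (s : Fin n → ℤ) : ℤ :=
  ∑ i ∈ Finset.Ico 1 n, height 0 s i

open scoped Classical in
/-- Motzkin paths of length `n`. -/
noncomputable def motzkinPaths (n : ℕ) : Finset (Fin n → ℤ) :=
  (Fintype.piFinset fun _ => ({1, 0, -1} : Finset ℤ)).filter
    (fun s => (∀ i ∈ Finset.Icc 1 n, 0 ≤ height 0 s i) ∧ height 0 s n = 0)

/-- The generating function whose coefficient of tⁿ is the sum of the areas of
all Motzkin paths of length n. -/
noncomputable def A : PowerSeries ℤ :=
  PowerSeries.mk fun n => ∑ w ∈ motzkinPaths n, area w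

/-!
Every Motzkin path of positive length is either `F v` or `U w D v` with `w`, `v` Motzkin paths
(split at the first return to height `0`), and lifting `w` by one step adds `|w| + 1` to the area.
With `M` the generating function of Motzkin paths this gives `M = 1 + tM + t²M²` and
`A = tA + t²(2A + (tM)')M`. Differentiating the first equation gives `(tM)' S = M` for
`S = 1 - t - 2t²M`, and `S² = 1 - 2t - 3t²` is the discriminant of that quadratic; hence
`A (1 - 2t - 3t²) = t²M²`. Eliminating `A` reduces the claim to a consequence of the quadratic.
-/

namespace MotzkinArea

def steps {n : ℕ} (s : Fin n → ℤ) (j : ℕ) : ℤ := if h : j < n then s ⟨j, h⟩ else 0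

def prefixSum (f : ℕ → ℤ) (i : ℕ) : ℤ := ∑ j ∈ range i, f j

@[simp] lemma prefixSum_zero (f : ℕ → ℤ) : prefixSum f 0 = 0 := sum_range_zero f

lemma prefixSum_succ (f : ℕ → ℤ) (i : ℕ) : prefixSum f (i + 1) = prefixSum f i + f i :=
  sum_range_succ f i

section steps

variable {n : ℕ} (s : Fin n → ℤ)

lemma steps_of_lt {j : ℕ} (h : j < n) : steps s j = s ⟨j, h⟩ := dif_pos h

lemma steps_of_le {j : ℕ} (h : n ≤ j) : steps s j = 0 := dif_neg h.not_gt

@[simp] lemma steps_coe (i : Fin n) : steps s i = s i := steps_of_lt s i.2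

lemma height_succ (a : ℤ) (i : ℕ) : height a s (i + 1) = height a s i + steps s i := by
  rw [height, height, add_assoc]
  congr 1
  by_cases h : i < n
  · have hset : univ.filter (fun j : Fin n => (j : ℕ) < i + 1)
        = insert ⟨i, h⟩ (univ.filter fun j : Fin n => (j : ℕ) < i) := by
      ext j
      simp only [mem_filter, mem_univ, mem_insert, true_and, Fin.ext_iff]
      omega
    rw [hset, sum_insert (by simp), steps_of_lt s h, add_comm]
  · have hset : univ.filter (fun j : Fin n => (j : ℕ) < i + 1)
        = univ.filter fun j : Fin n => (j : ℕ) < i := by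
      ext j
      simp only [mem_filter, mem_univ, true_and]
      omega
    rw [hset, steps_of_le s (not_lt.mp h), add_zero]

lemma height_eq (a : ℤ) (i : ℕ) : height a s i = a + prefixSum (steps s) i := by
  induction i with
  | zero => simp [height]
  | succ i ih => rw [height_succ, ih, prefixSum_succ, add_assoc]

lemma area_eq_sum_prefixSum : area s = ∑ i ∈ range n, prefixSum (steps s) i := by
  cases n with
  | zero => simp [area]
  | succ n => simp [area, sum_Ico_eq_sum_range, sum_range_succ' _ n, height_eq, add_comm 1]

end steps

lemma mem_motzkinPaths_iff {n : ℕ} {s : Fin n → ℤ} :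
    s ∈ motzkinPaths n ↔ (∀ j, s j = 1 ∨ s j = 0 ∨ s j = -1) ∧
      (∀ i ≤ n, 0 ≤ prefixSum (steps s) i) ∧ prefixSum (steps s) n = 0 := by
  classical
  simp only [motzkinPaths, mem_filter, Fintype.mem_piFinset, mem_insert, mem_singleton, mem_Icc,
    height_eq, zero_add, and_imp]
  refine and_congr_right' (and_congr_left' ⟨fun h i hi => ?_, fun h i _ hi => h i hi⟩)
  rcases Nat.eq_zero_or_pos i with rfl | hi0
  · simp
  · exact h i hi0 hi

section motzkin

variable {n : ℕ} {s : Fin n → ℤ} (hs : s ∈ motzkinPaths n)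
include hs

lemma steps_mem (j : ℕ) : steps s j = 1 ∨ steps s j = 0 ∨ steps s j = -1 := by
  by_cases h : j < n
  · exact steps_of_lt s h ▸ (mem_motzkinPaths_iff.mp hs).1 _
  · simp [steps_of_le s (not_lt.mp h)]

lemma prefixSum_nonneg {i : ℕ} (hi : i ≤ n) : 0 ≤ prefixSum (steps s) i :=
  (mem_motzkinPaths_iff.mp hs).2.1 i hi

lemma prefixSum_length : prefixSum (steps s) n = 0 :=
  (mem_motzkinPaths_iff.mp hs).2.2

lemma steps_zero_eq_one (hn : 1 ≤ n) (h0 : steps s 0 ≠ 0) : steps s 0 = 1 := by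
  have h1 := prefixSum_nonneg hs hn
  rw [prefixSum_succ, prefixSum_zero, zero_add] at h1
  rcases steps_mem hs 0 with h | h | h <;> omega

end motzkin

def flatSeq (f : ℕ → ℤ) (j : ℕ) : ℤ := if j = 0 then 0 else f (j - 1)

def archSeq (k : ℕ) (w v : ℕ → ℤ) (j : ℕ) : ℤ :=
  if j = 0 then 1 else if j ≤ k then w (j - 1) else if j = k + 1 then -1 else v (j - (k + 2))

lemma prefixSum_flatSeq_succ (f : ℕ → ℤ) (i : ℕ) :
    prefixSum (flatSeq f) (i + 1) = prefixSum f i := by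
  simp [prefixSum, flatSeq, sum_range_succ']

lemma prefixSum_archSeq_succ {k i : ℕ} (w v : ℕ → ℤ) (hi : i ≤ k) :
    prefixSum (archSeq k w v) (i + 1) = 1 + prefixSum w i := by
  rw [prefixSum, sum_range_succ', prefixSum, add_comm]
  refine congrArg₂ _ (by simp [archSeq]) (sum_congr rfl fun j hj => ?_)
  have : j < i := mem_range.mp hj
  simp [archSeq, show j + 1 ≤ k by omega]

lemma prefixSum_archSeq_add (k : ℕ) (w v : ℕ → ℤ) (i : ℕ) :
    prefixSum (archSeq k w v) (k + 2 + i) = prefixSum w k + prefixSum v i := by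
  have hpeak : prefixSum (archSeq k w v) (k + 2) = prefixSum w k := by
    rw [prefixSum_succ, prefixSum_archSeq_succ w v le_rfl]
    simp [archSeq]
  rw [prefixSum, sum_range_add, ← prefixSum, hpeak]
  congr 1
  refine sum_congr rfl fun j _ => ?_
  simp [archSeq, show ¬ k + 2 + j ≤ k by omega, show k + 2 + j ≠ k + 1 by omega]

def flatPath {m : ℕ} (v : Fin m → ℤ) : Fin (m + 1) → ℤ := fun i => flatSeq (steps v) i

/-- The path `U w D v`, of length `k + m + 2`; `N` is left free so that it can be used at lengths
that are only propositionally equal to `k + m + 2`. -/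
def archPath {k m N : ℕ} (w : Fin k → ℤ) (v : Fin m → ℤ) : Fin N → ℤ :=
  fun i => archSeq k (steps w) (steps v) i

def slice {N : ℕ} (s : Fin N → ℤ) (off : ℕ) {m : ℕ} : Fin m → ℤ := fun j => steps s (off + j)

lemma steps_flatPath {m : ℕ} (v : Fin m → ℤ) : steps (flatPath v) = flatSeq (steps v) := by
  funext j
  by_cases h : j < m + 1
  · exact steps_of_lt _ h
  · rw [steps_of_le _ (not_lt.mp h), flatSeq, if_neg (by omega), steps_of_le v (by omega)]

lemma steps_archPath {k m N : ℕ} (w : Fin k → ℤ) (v : Fin m → ℤ) (hN : N = k + m + 2) :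
    steps (archPath w v : Fin N → ℤ) = archSeq k (steps w) (steps v) := by
  funext j
  by_cases h : j < N
  · exact steps_of_lt _ h
  · rw [steps_of_le _ (not_lt.mp h), archSeq, if_neg (by omega), if_neg (by omega),
      if_neg (by omega), steps_of_le v (by omega)]

lemma steps_slice {N m : ℕ} (s : Fin N → ℤ) (off : ℕ) {j : ℕ} (hj : j < m) :
    steps (slice s off : Fin m → ℤ) j = steps s (off + j) :=
  steps_of_lt _ hj

lemma prefixSum_slice {N m : ℕ} (s : Fin N → ℤ) (off : ℕ) {i : ℕ} (hi : i ≤ m) :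
    prefixSum (steps s) (off + i) =
      prefixSum (steps s) off + prefixSum (steps (slice s off : Fin m → ℤ)) i := by
  rw [prefixSum, sum_range_add, ← prefixSum, prefixSum]
  congr 1
  exact sum_congr rfl fun j hj => (steps_slice s off (by simp at hj; omega)).symm

lemma flatPath_mem {m : ℕ} {v : Fin m → ℤ} (hv : v ∈ motzkinPaths m) :
    flatPath v ∈ motzkinPaths (m + 1) := by
  refine mem_motzkinPaths_iff.mpr ⟨fun j => ?_, fun i hi => ?_, ?_⟩
  · rw [← steps_coe (flatPath v), steps_flatPath, flatSeq]
    split_ifs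
    · simp
    · exact steps_mem hv _
  · rw [steps_flatPath]
    rcases i with _ | i
    · simp
    · rw [prefixSum_flatSeq_succ]
      exact prefixSum_nonneg hv (by omega)
  · rw [steps_flatPath, prefixSum_flatSeq_succ, prefixSum_length hv]

lemma archPath_mem {k m N : ℕ} {w : Fin k → ℤ} {v : Fin m → ℤ} (hw : w ∈ motzkinPaths k)
    (hv : v ∈ motzkinPaths m) (hN : N = k + m + 2) :
    (archPath w v : Fin N → ℤ) ∈ motzkinPaths N := by
  refine mem_motzkinPaths_iff.mpr ⟨fun j => ?_, fun i hi => ?_, ?_⟩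
  · rw [← steps_coe (archPath w v), steps_archPath w v hN, archSeq]
    split_ifs
    · simp
    · exact steps_mem hw _
    · simp
    · exact steps_mem hv _
  · rw [steps_archPath w v hN]
    rcases Nat.lt_or_ge i (k + 2) with hik | hik
    · rcases i with _ | i
      · simp
      · rw [prefixSum_archSeq_succ _ _ (by omega)]
        linarith [prefixSum_nonneg hw (show i ≤ k by omega)]
    · obtain ⟨i, rfl⟩ := Nat.exists_eq_add_of_le hik
      rw [prefixSum_archSeq_add, prefixSum_length hw, zero_add]
      exact prefixSum_nonneg hv (by omega)
  · rw [steps_archPath w v hN, hN, add_right_comm, prefixSum_archSeq_add, prefixSum_length hw,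
      prefixSum_length hv, add_zero]

lemma area_flatPath {m : ℕ} (v : Fin m → ℤ) : area (flatPath v) = area v := by
  simp [area_eq_sum_prefixSum, steps_flatPath, sum_range_succ', prefixSum_flatSeq_succ]

lemma area_archPath {k m N : ℕ} {w : Fin k → ℤ} (v : Fin m → ℤ) (hw : w ∈ motzkinPaths k)
    (hN : N = k + m + 2) :
    area (archPath w v : Fin N → ℤ) = area w + area v + (k + 1) := by
  have hlift : ∑ i ∈ range (k + 2), prefixSum (archSeq k (steps w) (steps v)) i
      = area w + (k + 1) := by
    rw [sum_range_succ', sum_congr rfl fun i hi =>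
        prefixSum_archSeq_succ (steps w) (steps v) (Nat.lt_succ_iff.mp (mem_range.mp hi))]
    simp [sum_add_distrib, sum_range_succ _ k, prefixSum_length hw, area_eq_sum_prefixSum]
    ring
  rw [area_eq_sum_prefixSum, steps_archPath w v hN, hN, add_right_comm, sum_range_add, hlift,
    area_eq_sum_prefixSum v]
  simp only [prefixSum_archSeq_add, prefixSum_length hw, zero_add]
  ring

def returnTimes {N : ℕ} (s : Fin N → ℤ) : Set ℕ := {i | 1 ≤ i ∧ prefixSum (steps s) i = 0}

noncomputable def firstReturn {N : ℕ} (s : Fin N → ℤ) : ℕ := sInf (returnTimes s)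

section firstReturn

variable {N : ℕ} {s : Fin N → ℤ} (hs : s ∈ motzkinPaths N) (hN : 1 ≤ N)
include hs hN

lemma length_mem_returnTimes : N ∈ returnTimes s := ⟨hN, prefixSum_length hs⟩

lemma firstReturn_spec : 1 ≤ firstReturn s ∧ prefixSum (steps s) (firstReturn s) = 0 :=
  Nat.sInf_mem ⟨N, length_mem_returnTimes hs hN⟩

lemma firstReturn_le : firstReturn s ≤ N := Nat.sInf_le (length_mem_returnTimes hs hN)

lemma one_le_prefixSum_of_lt_firstReturn {i : ℕ} (h1 : 1 ≤ i) (hi : i < firstReturn s) :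
    1 ≤ prefixSum (steps s) i := by
  have hne : prefixSum (steps s) i ≠ 0 := fun h0 =>
    (Nat.sInf_le (show i ∈ returnTimes s from ⟨h1, h0⟩)).not_gt hi
  have := prefixSum_nonneg hs (hi.le.trans (firstReturn_le hs hN))
  omega

variable (h0 : steps s 0 = 1)
include h0

lemma two_le_firstReturn : 2 ≤ firstReturn s := by
  obtain ⟨h1, hret⟩ := firstReturn_spec hs hN
  have hne : firstReturn s ≠ 1 := fun h => by
    rw [h, prefixSum_succ, prefixSum_zero, h0] at hret
    exact one_ne_zero hret
  omega

lemma prefixSum_pred_firstReturn :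
    prefixSum (steps s) (firstReturn s - 1) = 1 ∧ steps s (firstReturn s - 1) = -1 := by
  have h2 := two_le_firstReturn hs hN h0
  have hpos := one_le_prefixSum_of_lt_firstReturn hs hN (i := firstReturn s - 1) (by omega)
    (by omega)
  have hret := (firstReturn_spec hs hN).2
  obtain ⟨r, hr⟩ : ∃ r, firstReturn s = r + 1 := ⟨firstReturn s - 1, by omega⟩
  rw [hr, prefixSum_succ] at hret
  rw [hr, Nat.add_sub_cancel] at hpos ⊢
  rcases steps_mem hs r with h | h | h <;> omega

end firstReturn

lemma firstReturn_archPath {k m N : ℕ} {w : Fin k → ℤ} (v : Fin m → ℤ) (hw : w ∈ motzkinPaths k)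
    (hN : N = k + m + 2) : firstReturn (archPath w v : Fin N → ℤ) = k + 2 := by
  have hret : k + 2 ∈ returnTimes (archPath w v : Fin N → ℤ) := by
    refine ⟨by omega, ?_⟩
    rw [steps_archPath w v hN, ← add_zero (k + 2), prefixSum_archSeq_add, prefixSum_length hw,
      prefixSum_zero, add_zero]
  refine le_antisymm (Nat.sInf_le hret) (not_lt.mp fun hlt => ?_)
  obtain ⟨h1, hzero⟩ := Nat.sInf_mem ⟨_, hret⟩
  obtain ⟨i, hi⟩ : ∃ i, firstReturn (archPath w v : Fin N → ℤ) = i + 1 :=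
    ⟨_, (Nat.sub_add_cancel h1).symm⟩
  rw [← firstReturn, hi, steps_archPath w v hN, prefixSum_archSeq_succ _ _ (by omega)] at hzero
  linarith [prefixSum_nonneg hw (show i ≤ k by omega)]

lemma slice_flatPath {m : ℕ} (v : Fin m → ℤ) : (slice (flatPath v) 1 : Fin m → ℤ) = v := by
  funext j
  simp [slice, steps_flatPath, flatSeq]

lemma slice_archPath_one {k m N : ℕ} (w : Fin k → ℤ) (v : Fin m → ℤ) (hN : N = k + m + 2) :
    (slice (archPath w v : Fin N → ℤ) 1 : Fin k → ℤ) = w := by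
  funext j
  simp [slice, steps_archPath w v hN, archSeq, show 1 + (j : ℕ) ≤ k by omega]

lemma slice_archPath_add_two {k m N : ℕ} (w : Fin k → ℤ) (v : Fin m → ℤ) (hN : N = k + m + 2) :
    (slice (archPath w v : Fin N → ℤ) (k + 2) : Fin m → ℤ) = v := by
  funext j
  simp [slice, steps_archPath w v hN, archSeq, show ¬ k + 2 + (j : ℕ) ≤ k by omega,
    show k + 2 + (j : ℕ) ≠ k + 1 by omega]

lemma slice_mem {N m off : ℕ} {s : Fin N → ℤ} (hs : s ∈ motzkinPaths N) {c : ℤ}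
    (hge : ∀ i ≤ m, c ≤ prefixSum (steps s) (off + i)) (hstart : prefixSum (steps s) off = c)
    (hend : prefixSum (steps s) (off + m) = c) :
    (slice s off : Fin m → ℤ) ∈ motzkinPaths m := by
  refine mem_motzkinPaths_iff.mpr ⟨fun j => ?_, fun i hi => ?_, ?_⟩
  · exact steps_coe (slice s off : Fin m → ℤ) j ▸ steps_slice s off j.2 ▸ steps_mem hs _
  · linarith [prefixSum_slice s off hi (m := m), hge i hi]
  · linarith [prefixSum_slice s off le_rfl (m := m)]

section flat

variable {n : ℕ} {s : Fin (n + 1) → ℤ} (h0 : steps s 0 = 0)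
include h0

lemma flatPath_slice : flatPath (slice s 1 : Fin n → ℤ) = s := by
  funext i
  rw [← steps_coe s, flatPath, flatSeq]
  split_ifs with hi
  · rw [hi, h0]
  · rw [steps_slice s 1 (by omega), Nat.add_sub_cancel' (by omega)]

lemma slice_one_mem_of_flat (hs : s ∈ motzkinPaths (n + 1)) :
    (slice s 1 : Fin n → ℤ) ∈ motzkinPaths n :=
  slice_mem hs (fun i _ => prefixSum_nonneg hs (by omega)) (by simp [prefixSum_succ, h0])
    (by rw [add_comm 1 n, prefixSum_length hs])

end flat

section arch

variable {n k m : ℕ} {s : Fin n → ℤ} (hs : s ∈ motzkinPaths n) (hn : n = k + m + 2)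
  (hret : firstReturn s = k + 2)
include hs hn hret

lemma slice_add_two_mem_of_arch : (slice s (k + 2) : Fin m → ℤ) ∈ motzkinPaths m :=
  slice_mem hs (fun i _ => prefixSum_nonneg hs (by omega))
    (hret ▸ (firstReturn_spec hs (by omega)).2)
    (by rw [show k + 2 + m = n by omega, prefixSum_length hs])

variable (h0 : steps s 0 = 1)
include h0

lemma slice_one_mem_of_arch : (slice s 1 : Fin k → ℤ) ∈ motzkinPaths k := by
  have hpeak := (prefixSum_pred_firstReturn hs (by omega) h0).1
  rw [hret, show k + 2 - 1 = 1 + k by omega] at hpeak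
  exact slice_mem hs (fun i _ => one_le_prefixSum_of_lt_firstReturn hs (by omega) (by omega)
    (by omega)) (by simp [prefixSum_succ, h0]) hpeak

lemma archPath_slice :
    (archPath (slice s 1 : Fin k → ℤ) (slice s (k + 2) : Fin m → ℤ) : Fin n → ℤ) = s := by
  have hdown := (prefixSum_pred_firstReturn hs (by omega) h0).2
  rw [hret, show k + 2 - 1 = k + 1 by omega] at hdown
  funext i
  rw [← steps_coe s, archPath, archSeq]
  split_ifs with h1 h2 h3
  · rw [h1, h0]
  · rw [steps_slice s 1 (by omega), Nat.add_sub_cancel' (by omega)]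
  · rw [h3, hdown]
  · rw [steps_slice s (k + 2) (by omega), Nat.add_sub_cancel' (by omega)]

end arch

section decomposition

variable {β : Type*} [AddCommMonoid β]

lemma sum_filter_flat (n : ℕ) (g : (Fin (n + 1) → ℤ) → β) :
    ∑ s ∈ (motzkinPaths (n + 1)).filter (fun s => steps s 0 = 0), g s =
      ∑ v ∈ motzkinPaths n, g (flatPath v) := by
  refine sum_nbij' (fun s => slice s 1) flatPath (fun s hs => ?_) (fun v hv => ?_)
    (fun s hs => ?_) (fun v _ => slice_flatPath v) (fun s hs => ?_)
  · exact slice_one_mem_of_flat (mem_filter.mp hs).2 (mem_filter.mp hs).1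
  · exact mem_filter.mpr ⟨flatPath_mem hv, by simp [steps_flatPath, flatSeq]⟩
  · exact flatPath_slice (mem_filter.mp hs).2
  · rw [flatPath_slice (mem_filter.mp hs).2]

lemma sum_filter_arch {n k m : ℕ} (hn : n = k + m + 2) (g : (Fin n → ℤ) → β) :
    ∑ s ∈ ((motzkinPaths n).filter fun s => steps s 0 ≠ 0).filter
        (fun s => firstReturn s - 2 = k), g s =
      ∑ w ∈ motzkinPaths k, ∑ v ∈ motzkinPaths m, g (archPath w v) := by
  have hfiber : ∀ s ∈ ((motzkinPaths n).filter fun s => steps s 0 ≠ 0).filter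
      (fun s => firstReturn s - 2 = k),
      s ∈ motzkinPaths n ∧ steps s 0 = 1 ∧ firstReturn s = k + 2 := by
    intro s hs
    simp only [mem_filter] at hs
    obtain ⟨⟨hs, h0⟩, hret⟩ := hs
    have h1 := steps_zero_eq_one hs (by omega) h0
    exact ⟨hs, h1, by have := two_le_firstReturn hs (by omega) h1; omega⟩
  rw [← sum_product']
  refine sum_nbij' (fun s => (slice s 1, slice s (k + 2))) (fun p => archPath p.1 p.2)
    (fun s hs => ?_) (fun p hp => ?_) (fun s hs => ?_) (fun p hp => ?_) (fun s hs => ?_)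
  · obtain ⟨hs, h0, hret⟩ := hfiber s hs
    exact mem_product.mpr
      ⟨slice_one_mem_of_arch hs hn hret h0, slice_add_two_mem_of_arch hs hn hret⟩
  · obtain ⟨hw, hv⟩ := mem_product.mp hp
    simp [archPath_mem hw hv hn, steps_archPath _ _ hn, archSeq, firstReturn_archPath _ hw hn]
  · obtain ⟨hs, h0, hret⟩ := hfiber s hs
    exact archPath_slice hs hn hret h0
  · exact Prod.ext (slice_archPath_one _ _ hn) (slice_archPath_add_two _ _ hn)
  · obtain ⟨hs, h0, hret⟩ := hfiber s hs
    rw [archPath_slice hs hn hret h0]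

theorem sum_motzkinPaths_succ (n : ℕ) (g : (Fin (n + 1) → ℤ) → β) :
    ∑ s ∈ motzkinPaths (n + 1), g s = ∑ v ∈ motzkinPaths n, g (flatPath v) +
      ∑ k ∈ range n, ∑ w ∈ motzkinPaths k, ∑ v ∈ motzkinPaths (n - 1 - k), g (archPath w v) := by
  have hmaps : ∀ s ∈ (motzkinPaths (n + 1)).filter (fun s => steps s 0 ≠ 0),
      firstReturn s - 2 ∈ range n := by
    intro s hs
    obtain ⟨hs, h0⟩ := mem_filter.mp hs
    have := two_le_firstReturn hs (by omega) (steps_zero_eq_one hs (by omega) h0)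
    have := firstReturn_le hs (by omega)
    exact mem_range.mpr (by omega)
  rw [← sum_filter_add_sum_filter_not _ (fun s => steps s 0 = 0), sum_filter_flat,
    ← sum_fiberwise_of_maps_to hmaps]
  exact congrArg _ (sum_congr rfl fun k hk => sum_filter_arch (by simp at hk; omega) g)

end decomposition

open PowerSeries

noncomputable def motzkinGF : ℤ⟦X⟧ := mk fun n => ((motzkinPaths n).card : ℤ)

lemma card_motzkinPaths_zero : (motzkinPaths 0).card = 1 :=
  card_eq_one.mpr ⟨default, eq_singleton_iff_unique_mem.mpr
    ⟨mem_motzkinPaths_iff.mpr ⟨finZeroElim, fun i hi => by simp [Nat.le_zero.mp hi], rfl⟩,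
      fun _ _ => Subsingleton.elim _ _⟩⟩

lemma coeff_succ_X_sq_mul_mul {R : Type*} [Semiring R] (F G : R⟦X⟧) (n : ℕ) :
    coeff (n + 1) (X ^ 2 * (F * G)) = ∑ k ∈ range n, coeff k F * coeff (n - 1 - k) G := by
  rcases n with _ | n
  · simp [coeff_X_pow_mul']
  · rw [coeff_X_pow_mul', if_pos (by omega), coeff_mul,
      Nat.sum_antidiagonal_eq_sum_range_succ_mk]
    simp

lemma motzkinGF_eq : motzkinGF = 1 + X * motzkinGF + X ^ 2 * (motzkinGF * motzkinGF) := by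
  ext (_ | n)
  · simp [motzkinGF, card_motzkinPaths_zero]
  · rw [map_add, map_add, coeff_succ_X_mul, coeff_succ_X_sq_mul_mul]
    simpa [motzkinGF, coeff_one] using sum_motzkinPaths_succ n fun _ => (1 : ℤ)

lemma areaGF_eq :
    A = X * A + X ^ 2 * (A * motzkinGF + motzkinGF * A + d⁄dX ℤ (X * motzkinGF) * motzkinGF) := by
  ext (_ | n)
  · simp [A, area]
  · rw [map_add, coeff_succ_X_mul, mul_add, mul_add, map_add, map_add,
      coeff_succ_X_sq_mul_mul, coeff_succ_X_sq_mul_mul, coeff_succ_X_sq_mul_mul,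
      ← sum_add_distrib, ← sum_add_distrib]
    simp only [A, motzkinGF, coeff_mk, coeff_derivative, coeff_succ_X_mul]
    rw [sum_motzkinPaths_succ, sum_congr rfl fun v _ => area_flatPath v]
    refine congrArg _ (sum_congr rfl fun k hk => ?_)
    rw [sum_congr rfl fun w hw => sum_congr rfl fun v _ =>
      area_archPath v hw (show n + 1 = k + (n - 1 - k) + 2 by simp at hk; omega)]
    simp only [sum_add_distrib, sum_const, nsmul_eq_mul, ← mul_sum]
    ring

lemma derivative_X_mul_motzkinGF_mul :
    d⁄dX ℤ (X * motzkinGF) * (1 - X - 2 * X ^ 2 * motzkinGF) = motzkinGF := by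
  obtain ⟨P, hP⟩ : ∃ P, X * motzkinGF = P := ⟨_, rfl⟩
  have hPeq : P = X + X * P + X * P ^ 2 := by
    linear_combination X * motzkinGF_eq + (X + X * (X * motzkinGF + P) - 1) * hP
  have hd := congrArg (d⁄dX ℤ) hPeq
  simp only [map_add, Derivation.leibniz, Derivation.leibniz_pow, derivative_X, smul_eq_mul] at hd
  subst hP
  linear_combination hd - motzkinGF_eq

lemma areaGF_mul : A * (1 - 2 * X - 3 * X ^ 2) = X ^ 2 * motzkinGF ^ 2 := by
  set S : ℤ⟦X⟧ := 1 - X - 2 * X ^ 2 * motzkinGF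
  have hS : S ^ 2 = 1 - 2 * X - 3 * X ^ 2 := by linear_combination (-4 * X ^ 2) * motzkinGF_eq
  have hAS : A * S = X ^ 2 * motzkinGF * d⁄dX ℤ (X * motzkinGF) := by
    linear_combination areaGF_eq
  linear_combination S * hAS + X ^ 2 * motzkinGF * derivative_X_mul_motzkinGF_mul - A * hS

lemma motzkinGF_quartic :
    1 + (X ^ 2 + 2 * X - 1) * motzkinGF ^ 2 + X ^ 4 * motzkinGF ^ 4 = (0 : ℤ⟦X⟧) := by
  linear_combination (X * motzkinGF - motzkinGF - 1 - X ^ 2 * motzkinGF ^ 2) * motzkinGF_eq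

end MotzkinArea

/-- t² − (3t − 1)(t + 1)(t² + 2t − 1)·X + t²·(3t − 1)²·(t + 1)²·X² = 0
for the generating function X of the sums of areas of Motzkin paths. -/
theorem stmt19 :
    (PowerSeries.X : PowerSeries ℤ) ^ 2
      - (3 * (PowerSeries.X : PowerSeries ℤ) - 1) * ((PowerSeries.X : PowerSeries ℤ) + 1) *
          ((PowerSeries.X : PowerSeries ℤ) ^ 2 + 2 * (PowerSeries.X : PowerSeries ℤ) - 1) * A
      + (PowerSeries.X : PowerSeries ℤ) ^ 2 *
          (3 * (PowerSeries.X : PowerSeries ℤ) - 1) ^ 2 *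
          ((PowerSeries.X : PowerSeries ℤ) + 1) ^ 2 * A ^ 2 = 0 := by
  -- substituting `(3t - 1)(t + 1) A = -t²M²` leaves `t²` times the quartic
  open PowerSeries MotzkinArea in
  linear_combination X ^ 2 * motzkinGF_quartic +
    (X ^ 2 + 2 * X - 1 + X ^ 2 * (A * (1 - 2 * X - 3 * X ^ 2) + X ^ 2 * motzkinGF ^ 2)) * areaGF_mul
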